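/- arXiv:2012.09072 — 2 statements merged into one kernel-verified Lean document; each statement's English description precedes it below -/
import Mathlib

section
/- For every C₂ > 0 there exists C₃ > 0 and a threshold R ≥ e such that for all real numbers y, z with |y| ≥ R, one has C₂·|y|·|z|·√(|ln|z||) ≤ |z|²/2 + C₃·ln(|y|)·|y|². -/
/-!
Write `a = |y|`, `b = |z|` and split according to the size of `b`. For `b ≤ 1` the factor
`b √|ln b|` is bounded by `1`. For `1 ≤ b ≤ a⁴` one has `ln b ≤ 4 ln a`, and AM-GM absorbs the
product into `b² / 2 + 2 C₂² a² ln a`. For `b ≥ a⁴` the crude bound `ln b ≤ b` suffices, because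
then `√b ≥ a² ≥ 2 C₂ a` once `a` is large.
-/

open Real

lemma mul_sqrt_abs_log_le_one {x : ℝ} (hx₀ : 0 ≤ x) (hx₁ : x ≤ 1) : x * √|log x| ≤ 1 := by
  have hsq : x ^ 2 * |log x| ≤ 1 := by
    rcases hx₀.eq_or_lt with rfl | hx
    · simp
    have hlog : |log x * x| ≤ 1 := (abs_log_mul_self_lt x hx hx₁).le
    rw [abs_mul, abs_of_pos hx] at hlog
    nlinarith [abs_nonneg (log x)]
  calc x * √|log x| = √(x ^ 2 * |log x|) := by rw [sqrt_mul (sq_nonneg x), sqrt_sq hx₀]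
    _ ≤ √1 := sqrt_le_sqrt hsq
    _ = 1 := sqrt_one

lemma mul_mul_sqrt_abs_log_le_of_le_pow {c a b : ℝ} {n : ℕ} (hb : 1 ≤ b) (hba : b ≤ a ^ n) :
    c * b * √|log b| ≤ b ^ 2 / 2 + n * c ^ 2 * log a / 2 := by
  have ha : 0 < a ^ n := by linarith
  have hlog : |log b| ≤ n * log a := by
    rw [abs_of_nonneg (log_nonneg hb), ← log_pow]
    exact log_le_log (by linarith) hba
  have hamgm := two_mul_le_add_sq b (c * √|log b|)
  rw [mul_pow, sq_sqrt (abs_nonneg _)] at hamgm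
  nlinarith [sq_nonneg c]

lemma mul_mul_sqrt_abs_log_le_sq_div_two {c b : ℝ} (hc : 0 ≤ c) (hb : 1 ≤ b) (hcb : 2 * c ≤ √b) :
    c * b * √|log b| ≤ b ^ 2 / 2 := by
  have hlog : √|log b| ≤ √b := by
    rw [abs_of_nonneg (log_nonneg hb)]
    exact sqrt_le_sqrt (log_le_self (by linarith))
  have hsqrt : √b * √b = b := mul_self_sqrt (by linarith)
  calc c * b * √|log b| ≤ c * b * √b := by gcongr
    _ = b * (c * √b) := by ring
    _ ≤ b * (√b / 2 * √b) := by gcongr; linarith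
    _ = b ^ 2 / 2 := by rw [div_mul_eq_mul_div, hsqrt]; ring

lemma mul_mul_mul_sqrt_abs_log_le {C a b : ℝ} (hC : 0 ≤ C) (ha : exp 1 ≤ a) (hCa : 2 * C ≤ a)
    (hb : 0 ≤ b) : C * a * b * √|log b| ≤ b ^ 2 / 2 + (2 * C ^ 2 + C) * log a * a ^ 2 := by
  have ha₁ : 1 ≤ a := le_trans (by linarith [add_one_le_exp 1]) ha
  have hlog : 1 ≤ log a := by rwa [le_log_iff_exp_le (by linarith)]
  have hrest : 0 ≤ C * log a * a ^ 2 := by positivity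
  rcases le_total b 1 with hb₁ | hb₁
  · have hsmall : C * a * (b * √|log b|) ≤ C * a := by
      simpa using mul_le_mul_of_nonneg_left (mul_sqrt_abs_log_le_one hb hb₁)
        (by positivity : 0 ≤ C * a)
    have ha_le : C * a ≤ C * log a * a ^ 2 := by
      rw [mul_assoc]
      gcongr
      nlinarith
    nlinarith [sq_nonneg b, sq_nonneg C]
  rcases le_total b (a ^ 4) with hba | hba
  · have hmod := mul_mul_sqrt_abs_log_le_of_le_pow (c := C * a) hb₁ hba
    push_cast at hmod
    nlinarith
  · have hsqrt : 2 * (C * a) ≤ √b := by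
      calc 2 * (C * a) ≤ a ^ 2 := by nlinarith
        _ = √(a ^ 4) := by rw [show a ^ 4 = (a ^ 2) ^ 2 by ring, sqrt_sq (by positivity)]
        _ ≤ √b := sqrt_le_sqrt hba
    have hlarge := mul_mul_sqrt_abs_log_le_sq_div_two (by positivity) hb₁ hsqrt
    nlinarith [sq_nonneg C]

theorem stmt1 (C₂ : ℝ) (hC₂ : 0 < C₂) :
    ∃ C₃ > 0, ∃ R ≥ Real.exp 1, ∀ y z : ℝ, R ≤ |y| →
      C₂ * |y| * |z| * Real.sqrt (|Real.log (abs z)|) ≤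
        |z| ^ 2 / 2 + C₃ * Real.log |y| * |y| ^ 2 := by
  refine ⟨2 * C₂ ^ 2 + C₂, by positivity, exp 1 + 2 * C₂, by linarith, fun y z hy => ?_⟩
  exact mul_mul_mul_sqrt_abs_log_le hC₂.le (by linarith) (by linarith [exp_pos 1]) (abs_nonneg z)
end

section
/- Let β ≥ 2. For all real numbers y and v, |y + v|^β - |y|^β - β·|y|^{β-2}·y·v ≥ β(β-1)·3^{1-β}·|y|^{β-2}·v², where |y|^{β-2}·y is interpreted as 0 when y = 0. -/
open Real

/-!
Dividing by `|y|^β` reduces the claim to `1 + β t + c t² ≤ |1 + t|^β` with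
`c = β(β-1)3^{1-β}`. The only facts about `c` needed are `0 ≤ c ≤ 1` and `3c ≤ β`, which come
from `3^x ≥ exp x`. For `t ≥ -2/β`, Bernoulli gives `|1+t|^β ≥ (1 + βt/2)² ≥ 1 + βt + ct²`; on
`[-2, -2/β]` the convex quadratic `1 + βt + ct²` is nonpositive since it is so at both
endpoints; for `t ≤ -2`, `|1+t|^β ≥ (1+t)² ≥ 1 + βt + ct²`.
-/

lemma exp_le_three_rpow {x : ℝ} (hx : 0 ≤ x) : exp x ≤ 3 ^ x := by
  rw [← exp_one_rpow]
  gcongr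
  linarith [exp_one_lt_d9]

lemma three_mul_le_three_rpow {x : ℝ} (hx : 1 ≤ x) : 3 * x ≤ 3 ^ x := by
  have h := (add_one_le_exp (x - 1)).trans (exp_le_three_rpow (sub_nonneg.2 hx))
  rw [rpow_sub_one three_ne_zero] at h
  linarith

lemma mul_add_one_le_three_rpow {x : ℝ} (hx : 0 ≤ x) : x * (x + 1) ≤ 3 ^ x := by
  have h := (sum_le_exp_of_nonneg hx 4).trans (exp_le_three_rpow hx)
  simp only [Finset.sum_range_succ, Finset.sum_range_zero, Nat.factorial] at h
  push_cast at h
  -- `6 - 3x² + x³ = (x - 2)²(x + 1) + 2`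
  nlinarith [mul_nonneg (sq_nonneg (x - 2)) (by linarith : 0 ≤ x + 1)]

noncomputable def rpowTaylorConst (β : ℝ) : ℝ := β * (β - 1) * 3 ^ (1 - β)

section rpowTaylorConst

variable {β : ℝ}

lemma rpowTaylorConst_eq_div : rpowTaylorConst β = β * (β - 1) / 3 ^ (β - 1) := by
  rw [rpowTaylorConst, div_eq_mul_inv, ← rpow_neg (by norm_num), neg_sub]

lemma rpowTaylorConst_nonneg (hβ : 2 ≤ β) : 0 ≤ rpowTaylorConst β := by
  rw [rpowTaylorConst]
  have : 0 ≤ β - 1 := by linarith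
  positivity

lemma rpowTaylorConst_le_one (hβ : 2 ≤ β) : rpowTaylorConst β ≤ 1 := by
  have h := mul_add_one_le_three_rpow (x := β - 1) (by linarith)
  rw [rpowTaylorConst_eq_div, div_le_one (by positivity)]
  linarith

lemma three_mul_rpowTaylorConst_le (hβ : 2 ≤ β) : 3 * rpowTaylorConst β ≤ β := by
  have h := three_mul_le_three_rpow (x := β - 1) (by linarith)
  rw [rpowTaylorConst_eq_div, mul_div_assoc', div_le_iff₀ (by positivity)]
  nlinarith

lemma one_add_mul_add_rpowTaylorConst_mul_sq_le (hβ : 2 ≤ β) (t : ℝ) :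
    1 + β * t + rpowTaylorConst β * t ^ 2 ≤ |1 + t| ^ β := by
  have hc0 := rpowTaylorConst_nonneg hβ
  have hc1 := rpowTaylorConst_le_one hβ
  have hc3 := three_mul_rpowTaylorConst_le hβ
  set c := rpowTaylorConst β
  rcases le_or_gt 0 (1 + β / 2 * t) with hpos | hneg
  · have ht : -1 ≤ t := by nlinarith
    have hbern : 1 + β / 2 * t ≤ (1 + t) ^ (β / 2) :=
      one_add_mul_self_le_rpow_one_add ht (by linarith)
    have hsq : (1 + t) ^ β = ((1 + t) ^ (β / 2)) ^ 2 := by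
      rw [← rpow_mul_natCast (by linarith)]
      ring_nf
    have hcβ : 4 * c ≤ β ^ 2 := by nlinarith
    rw [abs_of_nonneg (by linarith), hsq]
    nlinarith [pow_le_pow_left₀ hpos hbern 2, mul_le_mul_of_nonneg_right hcβ (sq_nonneg t)]
  rcases le_or_gt (-2) t with hge | hlt
  · -- `c (t + 2)(t + 2/β) ≤ 0` bounds the quadratic by its chord
    have hchord : 0 ≤ c * ((t + 2) * (-(β * t) - 2)) :=
      mul_nonneg hc0 (mul_nonneg (by linarith) (by linarith))
    have : 1 + β * t + c * t ^ 2 ≤ 0 := by nlinarith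
    exact this.trans (by positivity)
  · have hle : |1 + t| ^ (2 : ℝ) ≤ |1 + t| ^ β := by
      refine rpow_le_rpow_of_exponent_le ?_ hβ
      rw [abs_of_neg (by linarith)]
      linarith
    rw [rpow_two, sq_abs] at hle
    nlinarith

lemma rpowTaylorConst_mul_rpow_mul_sq_le (hβ : 2 ≤ β) {y : ℝ} (hy : y ≠ 0) (v : ℝ) :
    rpowTaylorConst β * |y| ^ (β - 2) * v ^ 2 ≤
      |y + v| ^ β - |y| ^ β - β * (|y| ^ (β - 2) * y * v) := by
  have hy' : 0 < |y| := abs_pos.2 hy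
  have hpow : |y| ^ β = |y| ^ (β - 2) * y ^ 2 := by
    rw [← sq_abs, ← rpow_two, ← rpow_add hy', sub_add_cancel]
  have hscale : |y + v| ^ β = |y| ^ β * |1 + v / y| ^ β := by
    rw [← mul_rpow hy'.le (abs_nonneg _), ← abs_mul, mul_add, mul_one, mul_div_cancel₀ _ hy]
  have h := mul_le_mul_of_nonneg_left (one_add_mul_add_rpowTaylorConst_mul_sq_le hβ (v / y))
    (by positivity : 0 ≤ |y| ^ (β - 2) * y ^ 2)
  have hexpand : |y| ^ (β - 2) * y ^ 2 * (1 + β * (v / y) + rpowTaylorConst β * (v / y) ^ 2) =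
      |y| ^ (β - 2) * y ^ 2 + β * (|y| ^ (β - 2) * y * v) +
        rpowTaylorConst β * |y| ^ (β - 2) * v ^ 2 := by
    field_simp
  rw [hscale, hpow]
  linarith

lemma rpowTaylorConst_mul_zero_rpow_mul_sq_le (hβ : 2 ≤ β) (v : ℝ) :
    rpowTaylorConst β * 0 ^ (β - 2) * v ^ 2 ≤ |v| ^ β := by
  rcases hβ.eq_or_lt with rfl | hβ'
  · rw [sub_self, rpow_zero, mul_one, rpow_two, sq_abs]
    nlinarith [rpowTaylorConst_le_one le_rfl, sq_nonneg v]
  · rw [zero_rpow (by linarith), mul_zero, zero_mul]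
    positivity

end rpowTaylorConst

theorem stmt4 (β : ℝ) (hβ : 2 ≤ β) (y v : ℝ) :
    β * (β - 1) * (3 : ℝ) ^ (1 - β) * |y| ^ (β - 2) * v ^ 2 ≤
      |y + v| ^ β - |y| ^ β - β * ((if y = 0 then 0 else |y| ^ (β - 2) * y) * v) := by
  change rpowTaylorConst β * |y| ^ (β - 2) * v ^ 2 ≤ _
  split_ifs with hy
  · subst hy
    simpa [zero_rpow (by linarith : β ≠ 0)] using rpowTaylorConst_mul_zero_rpow_mul_sq_le hβ v
  · exact rpowTaylorConst_mul_rpow_mul_sq_le hβ hy v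
end
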